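/- Let $f$ be a map defined on a finite union of open subintervals of a compact interval $I$, diffeomorphic on each component, and let $U \subset I$ be a regularly returning open interval, i.e. $f^n(\partial U) \cap U = \emptyset$ for all $n > 0$. If $A$ is a connected component of $f^{-n}(U)$ and $B$ is a connected component of $f^{-m}(U)$ with $m \geq n$, then either $A \cap B = \emptyset$ or $B \subset A$. -/

import Mathlib

/-!
Let `A` be a component of the open set `f^{-n}(U)` and `B` a component of `f^{-m}(U)`, `n ≤ m`.
A point `z ∈ B` in the closure of `A` but outside `A` lies outside `f^{-n}(U)`, although `fⁿ` is
defined there; by continuity `fⁿ z` is then a boundary point of `U` whose orbit enters `U` after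
`m - n` more steps, which regular returning forbids. So `closure A ∩ B ⊆ A`, and the connected
set `B` either misses the open set `A` or lies in it.
-/

open Set Function

/-- `f` is read as a partial map with domain `D`; this is the domain of `f^[n]`. -/
def iterateDomain {X : Type*} (f : X → X) (D : Set X) (n : ℕ) : Set X :=
  {x | ∀ i < n, f^[i] x ∈ D}

/-- `f^{-n}(U)` for a partially defined `f` with domain `D`. -/
def iteratePreimage {X : Type*} (f : X → X) (D U : Set X) (n : ℕ) : Set X :=
  iterateDomain f D n ∩ f^[n] ⁻¹' U

section

variable {X : Type*} {f : X → X} {D U : Set X} {n m : ℕ}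

theorem iterateDomain_succ (n : ℕ) :
    iterateDomain f D (n + 1) = iterateDomain f D n ∩ f^[n] ⁻¹' D := by
  ext x
  simp only [iterateDomain, mem_ofPred_eq, mem_inter_iff, mem_preimage, Nat.lt_succ_iff_lt_or_eq,
    or_imp, forall_and, forall_eq]

theorem iterateDomain_anti : Antitone (iterateDomain f D) :=
  fun _ _ hnm _ hx i hi => hx i (lt_of_lt_of_le hi hnm)

variable [TopologicalSpace X]

theorem isOpen_iterateDomain_and_continuousOn (hD : IsOpen D) (hf : ContinuousOn f D) (n : ℕ) :
    IsOpen (iterateDomain f D n) ∧ ContinuousOn f^[n] (iterateDomain f D n) := by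
  induction n with
  | zero => simpa [iterateDomain] using (continuousOn_id : ContinuousOn id (univ : Set X))
  | succ n ih =>
    rw [iterateDomain_succ, iterate_succ']
    exact ⟨ih.2.isOpen_inter_preimage ih.1 hD,
      hf.comp (ih.2.mono inter_subset_left) fun _ hx => hx.2⟩

theorem isOpen_iteratePreimage (hD : IsOpen D) (hf : ContinuousOn f D) (hU : IsOpen U) (n : ℕ) :
    IsOpen (iteratePreimage f D U n) :=
  let h := isOpen_iterateDomain_and_continuousOn hD hf n
  h.2.isOpen_inter_preimage h.1 hU

theorem iterate_notMem_frontier_of_regularlyReturning (hU : IsOpen U)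
    (hrr : ∀ k > 0, ∀ x ∈ frontier U, (∀ i < k, f^[i] x ∈ D) → f^[k] x ∉ U)
    (hnm : n ≤ m) {x : X} (hx : x ∈ iteratePreimage f D U m) : f^[n] x ∉ frontier U := by
  intro hfr
  obtain ⟨k, rfl⟩ := Nat.exists_eq_add_of_le' hnm
  rcases Nat.eq_zero_or_pos k with rfl | hk
  · exact (hU.frontier_eq ▸ hfr).2 (by simpa using hx.2)
  · refine hrr k hk _ hfr (fun i hi => ?_) (by simpa [iterate_add_apply] using hx.2)
    rw [← iterate_add_apply]
    exact hx.1 _ (by omega)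

theorem mem_frontier_of_continuousAt_of_mapsTo {Y : Type*} [TopologicalSpace Y] {g : X → Y}
    {s : Set X} {V : Set Y} {z : X} (hg : ContinuousAt g z) (hV : IsOpen V) (hs : MapsTo g s V)
    (hz : z ∈ closure s) (hgz : g z ∉ V) : g z ∈ frontier V :=
  hV.frontier_eq ▸ ⟨closure_mono hs.image_subset (hg.continuousWithinAt.mem_closure_image hz), hgz⟩

theorem closure_connectedComponentIn_inter_subset [LocallyConnectedSpace X] {F : Set X}
    (hF : IsOpen F) (x : X) : closure (connectedComponentIn F x) ∩ F ⊆ connectedComponentIn F x := by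
  rintro z ⟨hzcl, hzF⟩
  obtain ⟨w, hwz, hwx⟩ := mem_closure_iff.mp hzcl _ hF.connectedComponentIn
    (mem_connectedComponentIn hzF)
  rw [connectedComponentIn_eq hwx, ← connectedComponentIn_eq hwz]
  exact mem_connectedComponentIn hzF

variable [LocallyConnectedSpace X]

theorem closure_connectedComponentIn_iteratePreimage_inter_subset (hD : IsOpen D)
    (hf : ContinuousOn f D) (hU : IsOpen U)
    (hrr : ∀ k > 0, ∀ x ∈ frontier U, (∀ i < k, f^[i] x ∈ D) → f^[k] x ∉ U)
    (hnm : n ≤ m) (x : X) :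
    closure (connectedComponentIn (iteratePreimage f D U n) x) ∩ iteratePreimage f D U m ⊆
      connectedComponentIn (iteratePreimage f D U n) x := by
  rintro z ⟨hzA, hzm⟩
  have hzn : z ∈ iterateDomain f D n := iterateDomain_anti hnm hzm.1
  refine closure_connectedComponentIn_inter_subset (isOpen_iteratePreimage hD hf hU n) x
    ⟨hzA, hzn, ?_⟩
  by_contra hfzU
  have hiter := isOpen_iterateDomain_and_continuousOn hD hf n
  have hcont : ContinuousAt f^[n] z := hiter.2.continuousAt (hiter.1.mem_nhds hzn)
  exact iterate_notMem_frontier_of_regularlyReturning hU hrr hnm hzm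
    (mem_frontier_of_continuousAt_of_mapsTo hcont hU
      (fun _ hw => (connectedComponentIn_subset _ _ hw).2) hzA hfzU)

theorem connectedComponentIn_iteratePreimage_disjoint_or_subset (hD : IsOpen D)
    (hf : ContinuousOn f D) (hU : IsOpen U)
    (hrr : ∀ k > 0, ∀ x ∈ frontier U, (∀ i < k, f^[i] x ∈ D) → f^[k] x ∉ U)
    (hnm : n ≤ m) (x y : X) :
    connectedComponentIn (iteratePreimage f D U n) x ∩
        connectedComponentIn (iteratePreimage f D U m) y = ∅ ∨
      connectedComponentIn (iteratePreimage f D U m) y ⊆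
        connectedComponentIn (iteratePreimage f D U n) x := by
  refine (eq_empty_or_nonempty _).imp id fun hAB => ?_
  exact isPreconnected_connectedComponentIn.subset_of_closure_inter_subset
    (isOpen_iteratePreimage hD hf hU n).connectedComponentIn (inter_comm _ _ ▸ hAB)
    fun z ⟨hzA, hzB⟩ => closure_connectedComponentIn_iteratePreimage_inter_subset hD hf hU hrr
      hnm x ⟨hzA, connectedComponentIn_subset _ _ hzB⟩

end

theorem nested_or_disjoint_preimages_of_regularly_returning_general
    (p : ℕ) (a b : ℕ → ℝ)
    (D : Set ℝ) (hD : D = ⋃ j ∈ Finset.range p, Ioo (a j) (b j))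
    (f : ℝ → ℝ) (hf : ContinuousOn f D)
    (U : Set ℝ) (hU : IsOpen U)
    -- regularly returning: forward images of ∂U (along defined orbits) never re-enter U
    (hrr : ∀ k > 0, ∀ x ∈ frontier U, (∀ i < k, f^[i] x ∈ D) → f^[k] x ∉ U)
    -- `preim n` is the set where `fⁿ` is defined and lands in `U`
    (preim : ℕ → Set ℝ)
    (hpreim : ∀ n, preim n = {x | (∀ i < n, f^[i] x ∈ D) ∧ f^[n] x ∈ U})
    (n m : ℕ) (hnm : n ≤ m)
    (x y : ℝ)
    (Acomp Bcomp : Set ℝ)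
    (hA : Acomp = connectedComponentIn (preim n) x)
    (hB : Bcomp = connectedComponentIn (preim m) y) :
    Acomp ∩ Bcomp = ∅ ∨ Bcomp ⊆ Acomp := by
  have hDopen : IsOpen D := hD ▸ isOpen_biUnion fun _ _ => isOpen_Ioo
  have hpreim' : preim = iteratePreimage f D U := funext hpreim
  subst hA hB hpreim'
  exact connectedComponentIn_iteratePreimage_disjoint_or_subset hDopen hf hU hrr hnm x y

/-- For a map `f` defined on a finite union of open subintervals of a
compact interval `I = Icc A B`, diffeomorphic (here: continuous and strictly monotone)
on each component, and a regularly returning open interval `U ⊆ I`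
(`fⁿ(∂U) ∩ U = ∅` for all `n > 0`), connected components of `f^{-n}(U)` and `f^{-m}(U)`
with `m ≥ n` are nested or disjoint. -/
theorem nested_or_disjoint_preimages_of_regularly_returning
    (A B : ℝ) (hAB : A < B)
    (p : ℕ) (a b : ℕ → ℝ)
    (D : Set ℝ) (hD : D = ⋃ j ∈ Finset.range p, Ioo (a j) (b j))
    (hDI : D ⊆ Icc A B)
    (hdisj : ∀ j ∈ Finset.range p, ∀ k ∈ Finset.range p, j ≠ k →
      Disjoint (Ioo (a j) (b j)) (Ioo (a k) (b k)))
    (f : ℝ → ℝ) (hf : ContinuousOn f D)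
    (hmono : ∀ j ∈ Finset.range p,
      StrictMonoOn f (Ioo (a j) (b j)) ∨ StrictAntiOn f (Ioo (a j) (b j)))
    (U : Set ℝ) (hU : IsOpen U) (hUconn : IsPreconnected U) (hUI : U ⊆ Icc A B)
    -- regularly returning: forward images of ∂U (along defined orbits) never re-enter U
    (hrr : ∀ k > 0, ∀ x ∈ frontier U, (∀ i < k, f^[i] x ∈ D) → f^[k] x ∉ U)
    -- `preim n` is the set where `fⁿ` is defined and lands in `U`
    (preim : ℕ → Set ℝ)
    (hpreim : ∀ n, preim n = {x | (∀ i < n, f^[i] x ∈ D) ∧ f^[n] x ∈ U})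
    (n m : ℕ) (hnm : n ≤ m)
    (x y : ℝ) (hx : x ∈ preim n) (hy : y ∈ preim m)
    (Acomp Bcomp : Set ℝ)
    (hA : Acomp = connectedComponentIn (preim n) x)
    (hB : Bcomp = connectedComponentIn (preim m) y) :
    Acomp ∩ Bcomp = ∅ ∨ Bcomp ⊆ Acomp :=
  nested_or_disjoint_preimages_of_regularly_returning_general p a b D hD f hf U hU hrr preim hpreim
    n m hnm x y Acomp Bcomp hA hB
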